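/- arXiv:2410.13493 — 6 statements merged into one kernel-verified Lean document; each statement's English description precedes it below -/
import Mathlib

section
/- Pathwise execution-cost identity: Let P_k := P⁰_k + ∑_{j<k} G(t_k − t_j)·ξ_j be the affected price just before trade k and P_{k+} := P_k + G(0)·ξ_k the price just after trade k. If G(0) > 0, then the total execution cost satisfies ∑_{k=0}^{N} ((P_{k+})² − (P_k)²)/(2·G(0)) = ∑_{k=0}^{N} ξ_k·P⁰_k + (1/2)·∑_{i=0}^{N}∑_{j=0}^{N} G(|t_i − t_j|)·ξ_i·ξ_j. -/
/-- Exchange of a triangular double sum over `Fin n`. -/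
lemma triangle_sum_swap (n : ℕ) (f : Fin n → Fin n → ℝ) :
    ∑ i, ∑ j ∈ Finset.Ioi i, f i j = ∑ j, ∑ i ∈ Finset.Iio j, f i j := by
  rw [Finset.sum_sigma', Finset.sum_sigma']
  apply Finset.sum_nbij' (fun p => ⟨p.2, p.1⟩) (fun p => ⟨p.2, p.1⟩) <;>
    simp [Finset.mem_Ioi, Finset.mem_Iio]

/-- Splitting a sum over `Fin n` at an index `i`. -/
lemma sum_split_at {n : ℕ} (i : Fin n) (g : Fin n → ℝ) :
    ∑ j, g j = (∑ j ∈ Finset.Iio i, g j) + g i + ∑ j ∈ Finset.Ioi i, g j := by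
  have huniv : (Finset.univ : Finset (Fin n)) = Finset.Iio i ∪ Finset.Ici i := by
    ext x; simp [lt_or_ge]
  have hdisj : Disjoint (Finset.Iio i) (Finset.Ici i) := by
    simp [Finset.disjoint_left]
  rw [huniv, Finset.sum_union hdisj, Finset.Ici_eq_cons_Ioi, Finset.sum_cons]
  ring

/-- **Pathwise execution-cost identity.**
With `P k` the affected price just before trade `k` and `Pplus k` the price just
after trade `k`, the total execution cost decomposes into the cost against the
unaffected price plus the quadratic impact cost. -/
theorem execution_cost_identity
    (N : ℕ) (t : Fin (N + 1) → ℝ) (ht : StrictMono t)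
    (G : ℝ → ℝ) (ξ P0 : Fin (N + 1) → ℝ) (hG : 0 < G 0)
    (P Pplus : Fin (N + 1) → ℝ)
    (hP : ∀ k, P k = P0 k + ∑ j ∈ Finset.Iio k, G (t k - t j) * ξ j)
    (hPplus : ∀ k, Pplus k = P k + G 0 * ξ k) :
    ∑ k, ((Pplus k) ^ 2 - (P k) ^ 2) / (2 * G 0) =
      ∑ k, ξ k * P0 k + (1 / 2) * ∑ i, ∑ j, G |t i - t j| * ξ i * ξ j := by
  have hG0 : G 0 ≠ 0 := ne_of_gt hG
  set f : Fin (N + 1) → Fin (N + 1) → ℝ := fun i j => G |t i - t j| * ξ i * ξ j with hf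
  -- per-term simplification of the LHS
  have hterm : ∀ k, ((Pplus k) ^ 2 - (P k) ^ 2) / (2 * G 0)
      = ξ k * P0 k + (∑ j ∈ Finset.Iio k, G (t k - t j) * ξ k * ξ j)
        + G 0 / 2 * (ξ k * ξ k) := by
    intro k
    have : ((Pplus k) ^ 2 - (P k) ^ 2) / (2 * G 0) = ξ k * P k + G 0 / 2 * (ξ k * ξ k) := by
      rw [hPplus k]; field_simp; ring
    rw [this, hP k, mul_add, Finset.mul_sum]
    congr 1
    · congr 1
      exact Finset.sum_congr rfl fun j _ => by ring
  -- values of f on the diagonal and triangles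
  have hdiag : ∀ i, f i i = G 0 * (ξ i * ξ i) := by
    intro i; simp only [hf, sub_self, abs_zero]; ring
  have hlow : ∀ i : Fin (N + 1), ∀ j ∈ Finset.Iio i, f i j = G (t i - t j) * ξ i * ξ j := by
    intro i j hj
    rw [Finset.mem_Iio] at hj
    simp only [hf, abs_of_pos (sub_pos.mpr (ht hj))]
  have hupp : ∀ j : Fin (N + 1), ∀ i ∈ Finset.Iio j, f j i = f i j := by
    intro j i _
    simp only [hf, abs_sub_comm (t j) (t i)]; ring
  -- split the double sum
  have hsplit : ∑ i, ∑ j, f i j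
      = (∑ i, ∑ j ∈ Finset.Iio i, f i j) + (∑ i, f i i)
        + ∑ i, ∑ j ∈ Finset.Ioi i, f i j := by
    rw [← Finset.sum_add_distrib, ← Finset.sum_add_distrib]
    exact Finset.sum_congr rfl fun i _ => sum_split_at i (f i)
  have hswap : ∑ i, ∑ j ∈ Finset.Ioi i, f i j = ∑ i, ∑ j ∈ Finset.Iio i, f i j := by
    rw [triangle_sum_swap]
    exact Finset.sum_congr rfl fun j _ => Finset.sum_congr rfl fun i hi => (hupp j i hi).symm
  have hL : ∑ i, ∑ j ∈ Finset.Iio i, f i j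
      = ∑ i, ∑ j ∈ Finset.Iio i, G (t i - t j) * ξ i * ξ j :=
    Finset.sum_congr rfl fun i _ => Finset.sum_congr rfl fun j hj => hlow i j hj
  have hD : ∑ i, f i i = ∑ i, G 0 * (ξ i * ξ i) :=
    Finset.sum_congr rfl fun i _ => hdiag i
  have hRHS : ∑ i, ∑ j, f i j
      = 2 * (∑ i, ∑ j ∈ Finset.Iio i, G (t i - t j) * ξ i * ξ j)
        + ∑ i, G 0 * (ξ i * ξ i) := by
    rw [hsplit, hswap, hL, hD]; ring
  calc ∑ k, ((Pplus k) ^ 2 - (P k) ^ 2) / (2 * G 0)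
      = ∑ k, (ξ k * P0 k + (∑ j ∈ Finset.Iio k, G (t k - t j) * ξ k * ξ j)
          + G 0 / 2 * (ξ k * ξ k)) := Finset.sum_congr rfl fun k _ => hterm k
    _ = (∑ k, ξ k * P0 k) + (∑ k, ∑ j ∈ Finset.Iio k, G (t k - t j) * ξ k * ξ j)
          + ∑ k, G 0 / 2 * (ξ k * ξ k) := by
        rw [← Finset.sum_add_distrib, ← Finset.sum_add_distrib]
    _ = ∑ k, ξ k * P0 k + (1 / 2) * ∑ i, ∑ j, G |t i - t j| * ξ i * ξ j := by
        have h2 : ∑ k, G 0 / 2 * (ξ k * ξ k) = 1 / 2 * ∑ k, G 0 * (ξ k * ξ k) := by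
          rw [Finset.mul_sum]
          exact Finset.sum_congr rfl fun k _ => by ring
        rw [show (∑ i, ∑ j, G |t i - t j| * ξ i * ξ j) = ∑ i, ∑ j, f i j from rfl, hRHS, h2]
        ring
end

section
/- Expected execution profits formula: If G(0) > 0, the strategy is deterministic with ∑_{k=0}^{N} ξ_k = −X₀, and each W_k is integrable with E[W_k] = 0, then the expected execution profits V^ξ := −E[∑_{k=0}^{N} ((P_{k+})² − (P_k)²)/(2·G(0))] satisfy V^ξ = p₀·X₀ − (1/2)·∑_{i=0}^{N}∑_{j=0}^{N} G(|t_i − t_j|)·ξ_i·ξ_j, where P_k := P⁰_k + ∑_{j<k} G(t_k − t_j)·ξ_j and P_{k+} := P_k + G(0)·ξ_k. -/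
open MeasureTheory

lemma offdiag_swap {N : ℕ} (f : Fin (N+1) → Fin (N+1) → ℝ)
    (hsym : ∀ i j, f i j = f j i) :
    ∑ i, ∑ j ∈ Finset.Ioi i, f i j = ∑ i, ∑ j ∈ Finset.Iio i, f i j := by
  rw [Finset.sum_sigma', Finset.sum_sigma']
  refine Finset.sum_nbij' (fun p => ⟨p.2, p.1⟩) (fun p => ⟨p.2, p.1⟩) ?_ ?_ ?_ ?_ ?_ <;>
    simp [hsym]

/-- **Expected execution profits formula.**
For a deterministic admissible strategy `ξ` with `∑ ξ k = −X₀` and zero-mean noise,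
the expected execution profits satisfy
`V = p₀·X₀ − (1/2)·∑ᵢ∑ⱼ G(|tᵢ−tⱼ|)·ξᵢ·ξⱼ`. -/
theorem expected_execution_profits
    (N : ℕ) (t : Fin (N + 1) → ℝ) (ht : StrictMono t)
    (G : ℝ → ℝ) (hG : 0 < G 0) (X₀ p₀ σW : ℝ)
    {Ω : Type*} [MeasurableSpace Ω] (μ : Measure Ω) [IsProbabilityMeasure μ]
    (W : Fin (N + 1) → Ω → ℝ)
    (hWint : ∀ k, Integrable (W k) μ)
    (hWmean : ∀ k, ∫ ω, W k ω ∂μ = 0)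
    (ξ : Fin (N + 1) → ℝ) (hliq : ∑ k, ξ k = -X₀)
    (P0 P Pplus : Fin (N + 1) → Ω → ℝ)
    (hP0 : ∀ k ω, P0 k ω = p₀ + σW * W k ω)
    (hP : ∀ k ω, P k ω = P0 k ω + ∑ j ∈ Finset.Iio k, G (t k - t j) * ξ j)
    (hPplus : ∀ k ω, Pplus k ω = P k ω + G 0 * ξ k)
    (V : ℝ)
    (hV : V = -∫ ω, ∑ k, ((Pplus k ω) ^ 2 - (P k ω) ^ 2) / (2 * G 0) ∂μ) :
    V = p₀ * X₀ - (1 / 2) * ∑ i, ∑ j, G |t i - t j| * ξ i * ξ j := by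
  set D : Fin (N + 1) → ℝ := fun k => ∑ j ∈ Finset.Iio k, G (t k - t j) * ξ j with hD
  set C : ℝ := ∑ k, (ξ k * (p₀ + D k) + G 0 / 2 * ξ k ^ 2) with hC
  -- pointwise identity for the integrand
  have hpt : ∀ ω, (∑ k, ((Pplus k ω) ^ 2 - (P k ω) ^ 2) / (2 * G 0))
      = C + ∑ k, σW * ξ k * W k ω := by
    intro ω
    rw [hC, ← Finset.sum_add_distrib]
    apply Finset.sum_congr rfl
    intro k _
    have hPk : P k ω = (p₀ + D k) + σW * W k ω := by
      rw [hP, hP0]; ring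
    rw [hPplus, hPk]
    field_simp
    ring
  -- compute the integral
  have hint : (∫ ω, ∑ k, ((Pplus k ω) ^ 2 - (P k ω) ^ 2) / (2 * G 0) ∂μ) = C := by
    have : (∫ ω, ∑ k, ((Pplus k ω) ^ 2 - (P k ω) ^ 2) / (2 * G 0) ∂μ)
        = ∫ ω, (C + ∑ k, σW * ξ k * W k ω) ∂μ := by
      exact integral_congr_ae (Filter.Eventually.of_forall hpt)
    rw [this]
    have hint2 : Integrable (fun ω => ∑ k, σW * ξ k * W k ω) μ :=
      integrable_finset_sum _ fun k _ => ((hWint k).const_mul _)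
    rw [integral_add (integrable_const C) hint2, integral_const,
      integral_finset_sum _ fun k _ => ((hWint k).const_mul _)]
    simp only [integral_const_mul, hWmean, mul_zero, Finset.sum_const_zero, add_zero]
    simp
  -- now pure algebra
  rw [hV, hint]
  -- symmetric double sum identity
  set f : Fin (N + 1) → Fin (N + 1) → ℝ := fun i j => G |t i - t j| * ξ i * ξ j with hf
  have hsym : ∀ i j, f i j = f j i := by
    intro i j; simp only [hf, abs_sub_comm]; ring
  have hswap : ∑ i, ∑ j ∈ Finset.Ioi i, f i j = ∑ i, ∑ j ∈ Finset.Iio i, f i j :=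
    offdiag_swap f hsym
  have hS : ∑ i, ∑ j, f i j
      = ∑ i, f i i + 2 * ∑ i, ∑ j ∈ Finset.Iio i, f i j := by
    have hsplit : ∀ i : Fin (N + 1), ∑ j, f i j
        = f i i + (∑ j ∈ Finset.Ioi i, f i j + ∑ j ∈ Finset.Iio i, f i j) := by
      intro i
      rw [← Finset.sum_erase_add _ _ (Finset.mem_univ i), add_comm]
      congr 1
      rw [← Finset.sum_disjUnion (Finset.disjoint_Ioi_Iio i)]
      apply Finset.sum_congr _ fun _ _ => rfl
      ext j
      simp only [Finset.mem_erase, Finset.mem_univ, and_true, Finset.mem_disjUnion,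
        Finset.mem_Ioi, Finset.mem_Iio]
      constructor
      · intro h; exact h.lt_or_gt.symm
      · rintro (h | h)
        exacts [ne_of_gt h, ne_of_lt h]
    simp only [hsplit, Finset.sum_add_distrib, hswap]
    ring
  have hdiag : ∀ i : Fin (N + 1), f i i = G 0 * ξ i ^ 2 := by
    intro i; simp only [hf, sub_self, abs_zero]; ring
  have hDf : ∀ k : Fin (N + 1), ξ k * D k = ∑ j ∈ Finset.Iio k, f k j := by
    intro k
    rw [hD, Finset.mul_sum]
    apply Finset.sum_congr rfl
    intro j hj
    have hjk : j < k := Finset.mem_Iio.mp hj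
    have : |t k - t j| = t k - t j := abs_of_pos (sub_pos.mpr (ht hjk))
    simp only [hf, this]; ring
  have hCval : C = p₀ * (-X₀) + ∑ k, ∑ j ∈ Finset.Iio k, f k j
      + (G 0 / 2) * ∑ k, ξ k ^ 2 := by
    rw [hC]
    simp only [Finset.sum_add_distrib, mul_add]
    rw [← Finset.sum_mul, hliq]
    simp only [← hDf]
    rw [Finset.mul_sum]
    apply congrArg₂ _ (congrArg₂ _ (by ring) rfl)
    apply Finset.sum_congr rfl
    intro k _; ring
  rw [hCval, hS]
  simp only [hdiag]
  rw [← Finset.mul_sum]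
  ring
end

section
/- Optimal execution cost value: Let M be a symmetric positive-definite real (N+1)×(N+1) matrix, 𝟙 the all-ones vector, X₀ ∈ ℝ, and ξ* := −(X₀/(𝟙ᵀM⁻¹𝟙))·M⁻¹𝟙. Then ξ*ᵀMξ* = X₀²/(𝟙ᵀM⁻¹𝟙); in particular the minimum of ξᵀMξ over all ξ with ∑_{k=0}^{N} ξ_k = −X₀ equals X₀²/(𝟙ᵀM⁻¹𝟙). -/
/-!
The minimiser is found by a Lagrange-multiplier argument: `ξ₀ := (t / uᵀM⁻¹u) • M⁻¹u` meets the
constraint `u ⬝ᵥ ξ = t` and `Mξ₀` is a multiple of `u`. Hence every other feasible `ξ` differs from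
`ξ₀` by an `M`-orthogonal vector `η`, so `ξᵀMξ = ξ₀ᵀMξ₀ + ηᵀMη ≥ ξ₀ᵀMξ₀ = t² / uᵀM⁻¹u`.
The theorem is the case `u = 𝟙`, `t = -X₀`.
-/

open Matrix

namespace Matrix

variable {ι : Type*} {M : Matrix ι ι ℝ} {u ξ η : ι → ℝ}

theorem PosDef.isSymm (hM : M.PosDef) : M.IsSymm :=
  isHermitian_iff_isSymm.mp hM.isHermitian

variable [Fintype ι]

theorem IsSymm.add_dotProduct_mulVec_add (hM : M.IsSymm) (h : ξ ⬝ᵥ (M *ᵥ η) = 0) :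
    (ξ + η) ⬝ᵥ (M *ᵥ (ξ + η)) = ξ ⬝ᵥ (M *ᵥ ξ) + η ⬝ᵥ (M *ᵥ η) := by
  have h' : η ⬝ᵥ (M *ᵥ ξ) = 0 := by
    rw [dotProduct_mulVec, ← mulVec_transpose, hM.eq, dotProduct_comm, h]
  simp only [mulVec_add, add_dotProduct, dotProduct_add, h, h']
  ring

variable [DecidableEq ι]

theorem PosDef.dotProduct_inv_mulVec_pos (hM : M.PosDef) (hu : u ≠ 0) :
    0 < u ⬝ᵥ (M⁻¹ *ᵥ u) :=
  hM.inv.dotProduct_mulVec_pos hu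

noncomputable def constrainedMinimizer (M : Matrix ι ι ℝ) (u : ι → ℝ) (t : ℝ) : ι → ℝ :=
  (t / (u ⬝ᵥ (M⁻¹ *ᵥ u))) • (M⁻¹ *ᵥ u)

variable {t : ℝ}

theorem mulVec_constrainedMinimizer (hM : IsUnit M) :
    M *ᵥ constrainedMinimizer M u t = (t / (u ⬝ᵥ (M⁻¹ *ᵥ u))) • u := by
  rw [constrainedMinimizer, mulVec_smul, mulVec_mulVec,
    mul_nonsing_inv M (M.isUnit_iff_isUnit_det.mp hM), one_mulVec]

theorem dotProduct_constrainedMinimizer (hc : u ⬝ᵥ (M⁻¹ *ᵥ u) ≠ 0) :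
    u ⬝ᵥ constrainedMinimizer M u t = t := by
  rw [constrainedMinimizer, dotProduct_smul, smul_eq_mul, div_mul_cancel₀ t hc]

theorem constrainedMinimizer_dotProduct_mulVec (hM : IsUnit M) :
    constrainedMinimizer M u t ⬝ᵥ (M *ᵥ constrainedMinimizer M u t) =
      t ^ 2 / (u ⬝ᵥ (M⁻¹ *ᵥ u)) := by
  rw [mulVec_constrainedMinimizer hM, dotProduct_smul, constrainedMinimizer, smul_dotProduct,
    dotProduct_comm _ u, smul_eq_mul, smul_eq_mul]
  rcases eq_or_ne (u ⬝ᵥ (M⁻¹ *ᵥ u)) 0 with hc | hc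
  · simp [hc]
  · field_simp

theorem constrainedMinimizer_dotProduct_mulVec_le (hM : M.PosDef) (hu : u ≠ 0)
    (hξ : u ⬝ᵥ ξ = t) :
    constrainedMinimizer M u t ⬝ᵥ (M *ᵥ constrainedMinimizer M u t) ≤ ξ ⬝ᵥ (M *ᵥ ξ) := by
  set ξ₀ := constrainedMinimizer M u t
  have hη : u ⬝ᵥ (ξ - ξ₀) = 0 := by
    rw [dotProduct_sub, hξ,
      dotProduct_constrainedMinimizer (hM.dotProduct_inv_mulVec_pos hu).ne', sub_self]
  have horth : ξ₀ ⬝ᵥ (M *ᵥ (ξ - ξ₀)) = 0 := by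
    rw [dotProduct_mulVec, ← mulVec_transpose, hM.isSymm.eq,
      mulVec_constrainedMinimizer hM.isUnit, smul_dotProduct, hη, smul_zero]
  calc ξ₀ ⬝ᵥ (M *ᵥ ξ₀) ≤ ξ₀ ⬝ᵥ (M *ᵥ ξ₀) + (ξ - ξ₀) ⬝ᵥ (M *ᵥ (ξ - ξ₀)) :=
        le_add_of_nonneg_right (hM.posSemidef.dotProduct_mulVec_nonneg _)
    _ = ξ ⬝ᵥ (M *ᵥ ξ) := by
        rw [← hM.isSymm.add_dotProduct_mulVec_add horth, add_sub_cancel]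

theorem isLeast_dotProduct_mulVec_of_dotProduct_eq (hM : M.PosDef) (hu : u ≠ 0) (t : ℝ) :
    IsLeast ((fun ξ => ξ ⬝ᵥ (M *ᵥ ξ)) '' {ξ | u ⬝ᵥ ξ = t}) (t ^ 2 / (u ⬝ᵥ (M⁻¹ *ᵥ u))) := by
  rw [← constrainedMinimizer_dotProduct_mulVec hM.isUnit]
  refine ⟨⟨_, dotProduct_constrainedMinimizer (hM.dotProduct_inv_mulVec_pos hu).ne', rfl⟩, ?_⟩
  rintro _ ⟨ξ, hξ, rfl⟩
  exact constrainedMinimizer_dotProduct_mulVec_le hM hu hξ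

end Matrix

theorem optimal_execution_cost_value_general
    (N : ℕ) (M : Matrix (Fin (N + 1)) (Fin (N + 1)) ℝ)
    (hpd : M.PosDef) (X₀ : ℝ)
    (one : Fin (N + 1) → ℝ) (hone : one = fun _ => 1)
    (ξstar : Fin (N + 1) → ℝ)
    (hξstar : ξstar = fun i => -(X₀ / (one ⬝ᵥ (M⁻¹ *ᵥ one))) * (M⁻¹ *ᵥ one) i) :
    ξstar ⬝ᵥ (M *ᵥ ξstar) = X₀ ^ 2 / (one ⬝ᵥ (M⁻¹ *ᵥ one)) ∧
    IsLeast ((fun ξ : Fin (N + 1) → ℝ => ξ ⬝ᵥ (M *ᵥ ξ)) ''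
        {ξ : Fin (N + 1) → ℝ | ∑ k, ξ k = -X₀})
      (X₀ ^ 2 / (one ⬝ᵥ (M⁻¹ *ᵥ one))) := by
  have hξstar_eq : ξstar = constrainedMinimizer M one (-X₀) := by
    rw [hξstar, constrainedMinimizer, neg_div]
    rfl
  have hconstraint : {ξ : Fin (N + 1) → ℝ | ∑ k, ξ k = -X₀} = {ξ | one ⬝ᵥ ξ = -X₀} := by
    simp only [hone, ← Pi.one_def, one_dotProduct]
  have hone_ne : one ≠ 0 := by
    rw [hone]
    exact one_ne_zero
  rw [hξstar_eq, hconstraint, ← neg_sq]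
  exact ⟨constrainedMinimizer_dotProduct_mulVec hpd.isUnit,
    isLeast_dotProduct_mulVec_of_dotProduct_eq hpd hone_ne _⟩

/-- **Optimal execution cost value.**
For a symmetric positive-definite matrix `M` and `ξ* := −(X₀/(𝟙ᵀM⁻¹𝟙))·M⁻¹𝟙`,
one has `ξ*ᵀMξ* = X₀²/(𝟙ᵀM⁻¹𝟙)`; in particular this value is the minimum of
`ξᵀMξ` over all `ξ` with `∑ ξₖ = −X₀`. -/
theorem optimal_execution_cost_value
    (N : ℕ) (M : Matrix (Fin (N + 1)) (Fin (N + 1)) ℝ)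
    (hsymm : M.IsSymm) (hpd : M.PosDef) (X₀ : ℝ)
    (one : Fin (N + 1) → ℝ) (hone : one = fun _ => 1)
    (ξstar : Fin (N + 1) → ℝ)
    (hξstar : ξstar = fun i => -(X₀ / (one ⬝ᵥ (M⁻¹ *ᵥ one))) * (M⁻¹ *ᵥ one) i) :
    ξstar ⬝ᵥ (M *ᵥ ξstar) = X₀ ^ 2 / (one ⬝ᵥ (M⁻¹ *ᵥ one)) ∧
    IsLeast ((fun ξ : Fin (N + 1) → ℝ => ξ ⬝ᵥ (M *ᵥ ξ)) ''
        {ξ : Fin (N + 1) → ℝ | ∑ k, ξ k = -X₀})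
      (X₀ ^ 2 / (one ⬝ᵥ (M⁻¹ *ᵥ one))) :=
  optimal_execution_cost_value_general N M hpd X₀ one hone ξstar hξstar
end

section
/- Unique maximizer of expected execution profits among deterministic strategies: Assume G(0) > 0, each W_k is integrable with E[W_k] = 0, and the impact matrix M with entries M_{ij} = G(|t_i − t_j|) is symmetric positive definite. Then the expected execution profits V^ξ := −E[∑_{k=0}^{N} ((P_{k+})² − (P_k)²)/(2·G(0))] (where P_k := p₀ + σ_W·W_k + ∑_{j<k} G(t_k − t_j)·ξ_j and P_{k+} := P_k + G(0)·ξ_k), considered over deterministic strategies ξ ∈ ℝ^{N+1} with ∑_{k=0}^{N} ξ_k = −X₀, are uniquely maximized by ξ* := −(X₀/(𝟙ᵀM⁻¹𝟙))·M⁻¹𝟙: V^{ξ*} ≥ V^ξ for every admissible deterministic ξ, with equality if and only if ξ = ξ*. -/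
/-!
Since `((P + G(0)ξ)² - P²) / (2G(0)) = Pξ + G(0)ξ²/2`, the noise enters the profits linearly
and drops out in expectation, and the remaining deterministic part is
`V ξ = -(p₀ ∑ ξₖ + ξᵀMξ / 2)`. On the hyperplane `𝟙ᵀξ = -X₀` maximizing `V` thus means
minimizing the positive definite form `ξᵀMξ`, whose minimizer there is the Lagrange point
`ξ* = -(X₀ / 𝟙ᵀM⁻¹𝟙) M⁻¹𝟙`: as `Mξ*` is a multiple of `𝟙`, every `ξ` on the hyperplane
satisfies `ξᵀMξ = ξ*ᵀMξ* + (ξ - ξ*)ᵀM(ξ - ξ*)`.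
-/

open MeasureTheory Matrix Finset

section OrderedSums

variable {ι M : Type*} [Fintype ι] [LinearOrder ι] [LocallyFiniteOrderBot ι]
  [LocallyFiniteOrderTop ι] [AddCommMonoid M]

lemma Finset.sum_eq_sum_Iio_add_add_sum_Ioi (f : ι → M) (k : ι) :
    ∑ j, f j = ∑ j ∈ Iio k, f j + f k + ∑ j ∈ Ioi k, f j := by
  rw [add_assoc, add_sum_Ioi_eq_sum_Ici, ← sum_filter_add_sum_filter_not univ (· < k)]
  congr 2 <;> ext <;> simp

lemma Finset.sum_sum_eq_sum_sum_Iio_add_sum_diag (f : ι → ι → M) :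
    ∑ k, ∑ j, f k j = ∑ k, ∑ j ∈ Iio k, (f k j + f j k) + ∑ k, f k k := by
  have hswap : ∑ k, ∑ j ∈ Ioi k, f k j = ∑ k, ∑ j ∈ Iio k, f j k :=
    sum_comm' fun _ _ => by simp only [mem_univ, mem_Ioi, mem_Iio, true_and, and_true]
  rw [sum_congr rfl fun k _ => sum_eq_sum_Iio_add_add_sum_Ioi (f k) k, sum_add_distrib,
    sum_add_distrib, hswap, add_right_comm]
  simp only [sum_add_distrib]

lemma Matrix.IsSymm.dotProduct_mulVec_self {R : Type*} [CommSemiring R] {A : Matrix ι ι R}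
    (hA : A.IsSymm) (x : ι → R) :
    x ⬝ᵥ A *ᵥ x = 2 * ∑ k, (∑ j ∈ Iio k, A k j * x j) * x k + ∑ k, A k k * x k ^ 2 := by
  simp only [dotProduct, mulVec, mul_sum, sum_mul]
  rw [sum_sum_eq_sum_sum_Iio_add_sum_diag]
  congr 1
  · refine sum_congr rfl fun k _ => sum_congr rfl fun j _ => ?_
    rw [hA.apply k j]
    ring
  · exact sum_congr rfl fun k _ => by ring

end OrderedSums

namespace Matrix

variable {n : Type*} [Fintype n] {A : Matrix n n ℝ} {v x : n → ℝ} {s : ℝ}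

lemma IsSymm.dotProduct_mulVec_comm {R : Type*} [CommSemiring R] {B : Matrix n n R}
    (hB : B.IsSymm) (x y : n → R) : x ⬝ᵥ B *ᵥ y = y ⬝ᵥ B *ᵥ x := by
  rw [dotProduct_mulVec, ← mulVec_transpose, hB.eq, dotProduct_comm]

lemma PosDef.dotProduct_mulVec_self_pos (hA : A.PosDef) (hx : x ≠ 0) : 0 < x ⬝ᵥ A *ᵥ x := by
  simpa using hA.dotProduct_mulVec_pos hx

lemma PosDef.dotProduct_mulVec_self_nonneg (hA : A.PosDef) (x : n → ℝ) :
    0 ≤ x ⬝ᵥ A *ᵥ x := by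
  simpa using hA.posSemidef.dotProduct_mulVec_nonneg x

variable [DecidableEq n]

noncomputable def hyperplaneMinimizer (A : Matrix n n ℝ) (v : n → ℝ) (s : ℝ) : n → ℝ :=
  (s / (v ⬝ᵥ A⁻¹ *ᵥ v)) • (A⁻¹ *ᵥ v)

namespace PosDef

lemma dotProduct_hyperplaneMinimizer (hA : A.PosDef) (hv : v ≠ 0) :
    v ⬝ᵥ A.hyperplaneMinimizer v s = s := by
  rw [hyperplaneMinimizer, dotProduct_smul, smul_eq_mul,
    div_mul_cancel₀ _ (hA.inv.dotProduct_mulVec_self_pos hv).ne']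

lemma mulVec_hyperplaneMinimizer (hA : A.PosDef) :
    A *ᵥ A.hyperplaneMinimizer v s = (s / (v ⬝ᵥ A⁻¹ *ᵥ v)) • v := by
  rw [hyperplaneMinimizer, mulVec_smul, mulVec_mulVec,
    mul_nonsing_inv A ((isUnit_iff_isUnit_det A).mp hA.isUnit), one_mulVec]

/-- `x - x*` is `A`-orthogonal to `x*`, because `A x*` is a multiple of `v` and
`v ⬝ᵥ (x - x*) = 0`. -/
lemma dotProduct_mulVec_self_eq_hyperplaneMinimizer_add (hA : A.PosDef) (hv : v ≠ 0)
    (hx : v ⬝ᵥ x = s) :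
    x ⬝ᵥ A *ᵥ x = A.hyperplaneMinimizer v s ⬝ᵥ A *ᵥ A.hyperplaneMinimizer v s
      + (x - A.hyperplaneMinimizer v s) ⬝ᵥ A *ᵥ (x - A.hyperplaneMinimizer v s) := by
  set x₀ := A.hyperplaneMinimizer v s
  have horth : (x - x₀) ⬝ᵥ A *ᵥ x₀ = 0 := by
    rw [hA.mulVec_hyperplaneMinimizer, dotProduct_smul, dotProduct_comm (x - x₀), dotProduct_sub,
      hx, hA.dotProduct_hyperplaneMinimizer hv, sub_self, smul_zero]
  have hx' : x = x₀ + (x - x₀) := (add_sub_cancel x₀ x).symm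
  conv_lhs => rw [hx']
  rw [mulVec_add, dotProduct_add, add_dotProduct, add_dotProduct,
    (isHermitian_iff_isSymm.mp hA.isHermitian).dotProduct_mulVec_comm x₀ (x - x₀), horth]
  ring

lemma dotProduct_mulVec_hyperplaneMinimizer_le (hA : A.PosDef) (hv : v ≠ 0)
    (hx : v ⬝ᵥ x = s) :
    A.hyperplaneMinimizer v s ⬝ᵥ A *ᵥ A.hyperplaneMinimizer v s ≤ x ⬝ᵥ A *ᵥ x := by
  rw [hA.dotProduct_mulVec_self_eq_hyperplaneMinimizer_add hv hx]
  exact le_add_of_nonneg_right (hA.dotProduct_mulVec_self_nonneg _)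

lemma dotProduct_mulVec_self_eq_hyperplaneMinimizer_iff (hA : A.PosDef) (hv : v ≠ 0)
    (hx : v ⬝ᵥ x = s) :
    x ⬝ᵥ A *ᵥ x = A.hyperplaneMinimizer v s ⬝ᵥ A *ᵥ A.hyperplaneMinimizer v s ↔
      x = A.hyperplaneMinimizer v s := by
  rw [hA.dotProduct_mulVec_self_eq_hyperplaneMinimizer_add hv hx, add_eq_left]
  constructor
  · intro h
    by_contra hne
    exact (hA.dotProduct_mulVec_self_pos (sub_ne_zero.mpr hne)).ne' h
  · rintro rfl
    rw [sub_self, zero_dotProduct]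

end PosDef

end Matrix

section ExpectedProfits

variable {Ω ι : Type*} [MeasurableSpace Ω] {μ : Measure Ω} [IsProbabilityMeasure μ]
  [Fintype ι] {W : ι → Ω → ℝ}

lemma integral_sum_sq_add_sub_sq_div (hWint : ∀ k, Integrable (W k) μ)
    (hWmean : ∀ k, ∫ ω, W k ω ∂μ = 0) {g : ℝ} (hg : g ≠ 0) (p σ : ℝ) (S ξ : ι → ℝ) :
    ∫ ω, ∑ k, ((p + σ * W k ω + S k + g * ξ k) ^ 2 - (p + σ * W k ω + S k) ^ 2) / (2 * g) ∂μ
      = ∑ k, ((p + S k) * ξ k + g / 2 * ξ k ^ 2) := by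
  have hlin : ∀ ω k, ((p + σ * W k ω + S k + g * ξ k) ^ 2 - (p + σ * W k ω + S k) ^ 2) / (2 * g)
      = ((p + S k) * ξ k + g / 2 * ξ k ^ 2) + σ * ξ k * W k ω := fun ω k => by
    field_simp
    ring
  have hint : ∀ k, Integrable (fun ω => (p + S k) * ξ k + g / 2 * ξ k ^ 2 + σ * ξ k * W k ω) μ :=
    fun k => (integrable_const _).add ((hWint k).const_mul _)
  simp_rw [hlin]
  rw [integral_finsetSum _ fun k _ => hint k]
  refine sum_congr rfl fun k _ => ?_
  rw [integral_add (integrable_const _) ((hWint k).const_mul _), integral_const,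
    integral_const_mul, hWmean k]
  simp

end ExpectedProfits

section ImpactMatrix

variable {ι : Type*}

lemma isSymm_of_abs_sub (G : ℝ → ℝ) (t : ι → ℝ) :
    (Matrix.of fun i j => G |t i - t j|).IsSymm := by
  ext i j
  simp [abs_sub_comm]

variable [Fintype ι] [LinearOrder ι] [LocallyFiniteOrderBot ι] [LocallyFiniteOrderTop ι]

lemma dotProduct_of_abs_sub_mulVec_self {t : ι → ℝ} (ht : Monotone t) (G : ℝ → ℝ) (ξ : ι → ℝ) :
    ξ ⬝ᵥ (Matrix.of fun i j => G |t i - t j|) *ᵥ ξ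
      = 2 * ∑ k, (∑ j ∈ Iio k, G (t k - t j) * ξ j) * ξ k + G 0 * ∑ k, ξ k ^ 2 := by
  rw [(isSymm_of_abs_sub G t).dotProduct_mulVec_self]
  simp only [of_apply, sub_self, abs_zero, ← mul_sum]
  congr 2
  refine sum_congr rfl fun k _ => congrArg (· * ξ k) (sum_congr rfl fun j hj => ?_)
  rw [abs_of_nonneg (sub_nonneg.mpr (ht (mem_Iio.mp hj).le))]

end ImpactMatrix

theorem unique_maximizer_expected_profits_general
    (N : ℕ) (t : Fin (N + 1) → ℝ) (ht : StrictMono t)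
    (G : ℝ → ℝ) (hG : 0 < G 0) (X₀ p₀ σW : ℝ)
    {Ω : Type*} [MeasurableSpace Ω] (μ : Measure Ω) [IsProbabilityMeasure μ]
    (W : Fin (N + 1) → Ω → ℝ)
    (hWint : ∀ k, Integrable (W k) μ)
    (hWmean : ∀ k, ∫ ω, W k ω ∂μ = 0)
    (M : Matrix (Fin (N + 1)) (Fin (N + 1)) ℝ)
    (hM : M = Matrix.of fun i j => G |t i - t j|)
    (hpd : M.PosDef)
    (one : Fin (N + 1) → ℝ) (hone : one = fun _ => 1)
    (V : (Fin (N + 1) → ℝ) → ℝ)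
    (hV : ∀ ξ : Fin (N + 1) → ℝ,
      V ξ = -∫ ω, ∑ k,
        (((p₀ + σW * W k ω + ∑ j ∈ Finset.Iio k, G (t k - t j) * ξ j) + G 0 * ξ k) ^ 2
          - (p₀ + σW * W k ω + ∑ j ∈ Finset.Iio k, G (t k - t j) * ξ j) ^ 2)
        / (2 * G 0) ∂μ)
    (ξstar : Fin (N + 1) → ℝ)
    (hξstar : ξstar = fun i => -(X₀ / (one ⬝ᵥ (M⁻¹ *ᵥ one))) * (M⁻¹ *ᵥ one) i) :
    (∑ k, ξstar k = -X₀) ∧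
    (∀ ξ : Fin (N + 1) → ℝ, ∑ k, ξ k = -X₀ →
      V ξ ≤ V ξstar ∧ (V ξ = V ξstar ↔ ξ = ξstar)) := by
  have hsum : ∀ ξ, one ⬝ᵥ ξ = ∑ k, ξ k := fun ξ => by rw [hone]; exact one_dotProduct ξ
  have hone_ne : one ≠ 0 := fun h => one_ne_zero (congrFun (hone.symm.trans h) 0)
  have hstar : ξstar = M.hyperplaneMinimizer one (-X₀) := by
    rw [hξstar, hyperplaneMinimizer]
    ext i
    rw [Pi.smul_apply, smul_eq_mul, neg_div]
  have hV' : ∀ ξ, V ξ = -(p₀ * ∑ k, ξ k + ξ ⬝ᵥ M *ᵥ ξ / 2) := fun ξ => by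
    rw [hV, integral_sum_sq_add_sub_sq_div hWint hWmean hG.ne', hM,
      dotProduct_of_abs_sub_mulVec_self ht.monotone]
    simp only [add_mul, sum_add_distrib, ← mul_sum]
    ring
  have hstar_sum : ∑ k, ξstar k = -X₀ := by
    rw [← hsum, hstar, hpd.dotProduct_hyperplaneMinimizer hone_ne]
  refine ⟨hstar_sum, fun ξ hξ => ?_⟩
  have hξ' : one ⬝ᵥ ξ = -X₀ := (hsum ξ).trans hξ
  have hle := hpd.dotProduct_mulVec_hyperplaneMinimizer_le hone_ne hξ'
  have hiff := hpd.dotProduct_mulVec_self_eq_hyperplaneMinimizer_iff hone_ne hξ'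
  rw [← hstar] at hle hiff
  rw [hV', hV', hξ, hstar_sum, ← hiff]
  exact ⟨by linarith, ⟨fun h => by linarith, fun h => by rw [h]⟩⟩

/-- **Unique maximizer of expected execution profits among deterministic strategies.**
If `G(0) > 0`, the noise has zero mean, and the impact matrix
`M i j = G(|tᵢ − tⱼ|)` is symmetric positive definite, then among deterministic
strategies `ξ` with `∑ ξₖ = −X₀` the expected execution profits `V ξ` are uniquely
maximized by `ξ* := −(X₀/(𝟙ᵀM⁻¹𝟙))·M⁻¹𝟙`. -/
theorem unique_maximizer_expected_profits
    (N : ℕ) (t : Fin (N + 1) → ℝ) (ht : StrictMono t)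
    (G : ℝ → ℝ) (hG : 0 < G 0) (X₀ p₀ σW : ℝ)
    {Ω : Type*} [MeasurableSpace Ω] (μ : Measure Ω) [IsProbabilityMeasure μ]
    (W : Fin (N + 1) → Ω → ℝ)
    (hWint : ∀ k, Integrable (W k) μ)
    (hWmean : ∀ k, ∫ ω, W k ω ∂μ = 0)
    (M : Matrix (Fin (N + 1)) (Fin (N + 1)) ℝ)
    (hM : M = Matrix.of fun i j => G |t i - t j|)
    (hsymm : M.IsSymm) (hpd : M.PosDef)
    (one : Fin (N + 1) → ℝ) (hone : one = fun _ => 1)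
    (V : (Fin (N + 1) → ℝ) → ℝ)
    (hV : ∀ ξ : Fin (N + 1) → ℝ,
      V ξ = -∫ ω, ∑ k,
        (((p₀ + σW * W k ω + ∑ j ∈ Finset.Iio k, G (t k - t j) * ξ j) + G 0 * ξ k) ^ 2
          - (p₀ + σW * W k ω + ∑ j ∈ Finset.Iio k, G (t k - t j) * ξ j) ^ 2)
        / (2 * G 0) ∂μ)
    (ξstar : Fin (N + 1) → ℝ)
    (hξstar : ξstar = fun i => -(X₀ / (one ⬝ᵥ (M⁻¹ *ᵥ one))) * (M⁻¹ *ᵥ one) i) :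
    (∑ k, ξstar k = -X₀) ∧
    (∀ ξ : Fin (N + 1) → ℝ, ∑ k, ξ k = -X₀ →
      V ξ ≤ V ξstar ∧ (V ξ = V ξstar ↔ ξ = ξstar)) :=
  unique_maximizer_expected_profits_general N t ht G hG X₀ p₀ σW μ W hWint hWmean M hM hpd one hone
    V hV ξstar hξstar
end

section
/- Positive definiteness of the impact matrix for strictly convex decay kernels: Let G : ℝ → ℝ be positive, nonincreasing on [0,∞), and strictly convex on [0,∞), and let t₀ < t₁ < ... < t_N be strictly increasing trading times. Then the impact matrix M with entries M_{ij} = G(|t_i − t_j|), 0 ≤ i,j ≤ N, is a symmetric positive-definite matrix: for every nonzero ξ ∈ ℝ^{N+1}, ∑_{i=0}^{N}∑_{j=0}^{N} G(|t_i − t_j|)·ξ_i·ξ_j > 0. -/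
/-!
Only the values of `G` at the finitely many distances `|tᵢ - tⱼ|` enter `M`. On a grid
`0 = d₀ < d₁ < ⋯ < dₘ` containing them, `G` agrees with its piecewise-linear interpolant
`G(dₘ) + ∑ₖ wₖ (dₖ₊₁ - r)⁺`, where `wₖ` is the increase of the secant slope at `dₖ₊₁`
(the slope being `0` beyond `dₘ`); strict convexity and monotonicity make every `wₖ`
positive. The tent kernel `(a - |u - v|)⁺` is the `L²` inner product of the indicators of
`[u, u + a)` and `[v, v + a)`, so its matrices are Gram matrices, and the constant kernel is
`c • 𝟙𝟙ᵀ`. At `a = d₁`, which lies below every nonzero distance, the tent matrix is `d₁ • 1`,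
and this makes `M` positive definite.
-/


open Matrix MeasureTheory Finset

section

variable {ι : Type*}

def kernelMatrix (f : ℝ → ℝ) (t : ι → ℝ) : Matrix ι ι ℝ :=
  of fun i j => f |t i - t j|

theorem volume_real_Ico_inter_Ico (u v a : ℝ) :
    volume.real (Set.Ico u (u + a) ∩ Set.Ico v (v + a)) = max (a - |u - v|) 0 := by
  rw [Set.Ico_inter_Ico, Real.volume_real_Ico, min_add_add_right, abs_sub_comm,
    ← max_sub_min_eq_abs]
  congr 1
  ring

theorem kernelMatrix_tent_eq_gram (t : ι → ℝ) (a : ℝ) :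
    kernelMatrix (fun r => max (a - r) 0) t =
      gram ℝ fun i => (indicatorConstLp 2 (measurableSet_Ico (a := t i) (b := t i + a))
        measure_Ico_lt_top.ne (1 : ℝ) : Lp ℝ 2 (volume : Measure ℝ)) := by
  ext i j
  rw [gram_apply, L2.inner_indicatorConstLp_one_indicatorConstLp_one _ _ measure_Ico_lt_top.ne
    measure_Ico_lt_top.ne, volume_real_Ico_inter_Ico]
  rfl

theorem posSemidef_kernelMatrix_tent [Finite ι] (t : ι → ℝ) (a : ℝ) :
    (kernelMatrix (fun r => max (a - r) 0) t).PosSemidef := by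
  rw [kernelMatrix_tent_eq_gram]
  exact posSemidef_gram ℝ _

theorem kernelMatrix_tent_eq_smul_one [DecidableEq ι] {t : ι → ℝ} {a : ℝ} (ha : 0 ≤ a)
    (hsep : ∀ i j, i ≠ j → a ≤ |t i - t j|) :
    kernelMatrix (fun r => max (a - r) 0) t = a • 1 := by
  ext i j
  rcases eq_or_ne i j with rfl | hij
  · simp [kernelMatrix, ha]
  · simp [kernelMatrix, hij, hsep i j hij]

theorem posSemidef_kernelMatrix_const [Fintype ι] (t : ι → ℝ) {c : ℝ} (hc : 0 ≤ c) :
    (kernelMatrix (fun _ => c) t).PosSemidef := by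
  have : kernelMatrix (fun _ => c) t = c • vecMulVec 1 (star 1) := by
    ext i j
    simp [kernelMatrix]
  rw [this]
  exact (posSemidef_vecMulVec_self_star 1).smul hc

theorem slope_neg_of_strictConvexOn_of_antitoneOn {G : ℝ → ℝ} {a x y : ℝ}
    (hGmono : AntitoneOn G (Set.Ici a)) (hGconv : StrictConvexOn ℝ (Set.Ici a) G)
    (hx : a ≤ x) (hxy : x < y) : slope G x y < 0 := by
  have hy : a ≤ y := hx.trans hxy.le
  have hy1 : a ≤ y + 1 := by linarith
  calc slope G x y < slope G y (y + 1) := by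
        simpa only [slope_def_field] using
          hGconv.slope_strict_mono_adjacent hx hy1 hxy (lt_add_one y)
    _ ≤ 0 := by
        rw [slope_def_field]
        exact div_nonpos_of_nonpos_of_nonneg
          (sub_nonpos.2 (hGmono hy hy1 (by linarith))) (by linarith)

noncomputable def gridSlope (G : ℝ → ℝ) (d : ℕ → ℝ) (m k : ℕ) : ℝ :=
  if k < m then slope G (d k) (d (k + 1)) else 0

theorem eq_add_sum_gridSlope_tent (G : ℝ → ℝ) {d : ℕ → ℝ} (hd : StrictMono d) {m j : ℕ}
    (hj : j ≤ m) :
    G (d j) = G (d m) + ∑ k ∈ range m,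
      (gridSlope G d m (k + 1) - gridSlope G d m k) * max (d (k + 1) - d j) 0 := by
  set σ := gridSlope G d m
  have below : ∑ k ∈ range j, (σ (k + 1) - σ k) * max (d (k + 1) - d j) 0 = 0 :=
    sum_eq_zero fun k hk => by
      rw [max_eq_right (sub_nonpos.2 (hd.monotone (mem_range.1 hk))), mul_zero]
  have above : ∀ k ∈ Ico j m, (σ (k + 1) - σ k) * max (d (k + 1) - d j) 0 =
      (σ (k + 1) * (d (k + 1) - d j) - σ k * (d k - d j)) - (G (d (k + 1)) - G (d k)) := by
    intro k hk
    obtain ⟨hjk, hkm⟩ := mem_Ico.1 hk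
    have hσk : σ k * (d (k + 1) - d k) = G (d (k + 1)) - G (d k) := by
      simp only [σ, gridSlope, if_pos hkm]
      simpa only [smul_eq_mul, vsub_eq_sub, mul_comm] using sub_smul_slope G (d k) (d (k + 1))
    rw [max_eq_left (sub_nonneg.2 (hd.monotone (by omega)))]
    linear_combination -hσk
  rw [← sum_range_add_sum_Ico _ hj, below, zero_add, sum_congr rfl above, sum_sub_distrib,
    sum_Ico_sub (fun k => σ k * (d k - d j)) hj, sum_Ico_sub (fun k => G (d k)) hj]
  simp [σ, gridSlope]

theorem gridSlope_lt_gridSlope_succ {G : ℝ → ℝ} (hGmono : AntitoneOn G (Set.Ici 0))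
    (hGconv : StrictConvexOn ℝ (Set.Ici 0) G) {d : ℕ → ℝ} (hd : StrictMono d) (hd0 : 0 ≤ d 0)
    {m k : ℕ} (hk : k < m) :
    gridSlope G d m k < gridSlope G d m (k + 1) := by
  have hnn : ∀ n, 0 ≤ d n := fun n => hd0.trans (hd.monotone n.zero_le)
  rw [gridSlope, gridSlope, if_pos hk]
  split_ifs with hk1
  · simpa only [slope_def_field] using hGconv.slope_strict_mono_adjacent (hnn k) (hnn (k + 2))
      (hd k.lt_succ_self) (hd (k + 1).lt_succ_self)
  · exact slope_neg_of_strictConvexOn_of_antitoneOn hGmono hGconv (hnn k) (hd k.lt_succ_self)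

theorem kernelMatrix_eq_const_add_sum_tent (G : ℝ → ℝ) (t : ι → ℝ) {d : ℕ → ℝ}
    (hd : StrictMono d) {m : ℕ} (hgrid : ∀ i j, ∃ k ≤ m, d k = |t i - t j|) :
    kernelMatrix G t = kernelMatrix (fun _ => G (d m)) t + ∑ k ∈ range m,
      (gridSlope G d m (k + 1) - gridSlope G d m k) •
        kernelMatrix (fun r => max (d (k + 1) - r) 0) t := by
  ext i j
  obtain ⟨k, hk, hdk⟩ := hgrid i j
  simp only [Matrix.add_apply, Matrix.sum_apply, Matrix.smul_apply, kernelMatrix, of_apply,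
    smul_eq_mul, ← hdk]
  exact eq_add_sum_gridSlope_tent G hd hk

theorem Finset.exists_strictMono_image_range (s : Finset ℝ) :
    ∃ d : ℕ → ℝ, StrictMono d ∧ (range #s).image d = s := by
  classical
  induction s using Finset.induction_on_max with
  | empty => exact ⟨Nat.cast, Nat.strictMono_cast, rfl⟩
  | insert a s ha ih =>
    obtain ⟨d, hd, hds⟩ := ih
    have has : a ∉ s := fun h => (ha a h).false
    refine ⟨fun k => if k < #s then d k else a + (k - #s),
      strictMono_nat_of_lt_succ fun k => ?_, ?_⟩
    · have hdk : k < #s → d k < a := fun hk => ha _ (hds ▸ mem_image_of_mem d (mem_range.2 hk))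
      rcases lt_trichotomy (k + 1) #s with hk | hk | hk
      · simp [hk, (Nat.lt_succ_self k).trans hk, hd (Nat.lt_succ_self k)]
      · rw [if_pos (by omega), if_neg hk.not_lt, hk, sub_self, add_zero]
        exact hdk (by omega)
      · simp [show ¬ k < #s by omega, show ¬ k + 1 < #s by omega]
    · rw [card_insert_of_notMem has, range_add_one, image_insert, if_neg (lt_irrefl _), sub_self,
        add_zero]
      exact congrArg _ ((image_congr fun k hk => if_pos (mem_range.1 hk)).trans hds)

theorem exists_grid_containing_distances [Fintype ι] {t : ι → ℝ} (ht : Function.Injective t) :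
    ∃ (d : ℕ → ℝ) (m : ℕ), StrictMono d ∧ d 0 = 0 ∧ 0 < m ∧
      (∀ i j, ∃ k ≤ m, d k = |t i - t j|) ∧ ∀ i j, i ≠ j → d 1 ≤ |t i - t j| := by
  classical
  set D : Finset ℝ := insert 0 (insert 1 (univ.image fun p : ι × ι => |t p.1 - t p.2|))
  have hDnonneg : ∀ r ∈ D, 0 ≤ r := by
    simp only [D, mem_insert, mem_image]
    rintro r (rfl | rfl | ⟨p, -, rfl⟩) <;> positivity
  have hdist : ∀ i j, |t i - t j| ∈ D := fun i j =>
    mem_insert_of_mem (mem_insert_of_mem (mem_image_of_mem _ (mem_univ (i, j))))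
  obtain ⟨d, hd, hdD⟩ := D.exists_strictMono_image_range
  -- the point `1` makes `0 < m` even when no distance is positive
  have hcard : 1 < #D := one_lt_card.2 ⟨0, mem_insert_self _ _, 1, by simp [D], zero_ne_one⟩
  have hgrid : ∀ r ∈ D, ∃ k ≤ #D - 1, d k = r := by
    intro r hr
    obtain ⟨k, hk, rfl⟩ := mem_image.1 (hdD ▸ hr)
    exact ⟨k, by have := mem_range.1 hk; omega, rfl⟩
  have hd0 : d 0 = 0 := by
    obtain ⟨k, -, hk⟩ := hgrid 0 (mem_insert_self _ _)
    exact le_antisymm (hk ▸ hd.monotone k.zero_le)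
      (hDnonneg _ (hdD ▸ mem_image_of_mem d (mem_range.2 (by omega))))
  refine ⟨d, #D - 1, hd, hd0, by omega, fun i j => hgrid _ (hdist i j), fun i j hij => ?_⟩
  obtain ⟨k, -, hk⟩ := hgrid _ (hdist i j)
  have hk0 : k ≠ 0 := by
    rintro rfl
    exact hij (ht (sub_eq_zero.1 (abs_eq_zero.1 (hk.symm.trans hd0))))
  exact hk ▸ hd.monotone (Nat.one_le_iff_ne_zero.2 hk0)

theorem posDef_kernelMatrix [Fintype ι] {G : ℝ → ℝ} (hGnonneg : ∀ s, 0 ≤ s → 0 ≤ G s)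
    (hGmono : AntitoneOn G (Set.Ici 0)) (hGconv : StrictConvexOn ℝ (Set.Ici 0) G)
    {t : ι → ℝ} (ht : Function.Injective t) : (kernelMatrix G t).PosDef := by
  classical
  obtain ⟨d, m, hd, hd0, hm, hgrid, hsep⟩ := exists_grid_containing_distances ht
  have hweight : ∀ k < m, 0 < gridSlope G d m (k + 1) - gridSlope G d m k := fun k hk =>
    sub_pos.2 (gridSlope_lt_gridSlope_succ hGmono hGconv hd hd0.ge hk)
  have hd1 : 0 < d 1 := hd0 ▸ hd zero_lt_one
  rw [kernelMatrix_eq_const_add_sum_tent G t hd hgrid, sum_range_eq_add_Ico _ hm, zero_add,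
    kernelMatrix_tent_eq_smul_one hd1.le hsep, smul_smul]
  exact PosDef.posSemidef_add
    (posSemidef_kernelMatrix_const t (hGnonneg _ (hd0 ▸ hd.monotone m.zero_le)))
    (PosDef.add_posSemidef (PosDef.one.smul (mul_pos (hweight 0 hm) hd1))
      (posSemidef_sum _ fun k hk =>
        (posSemidef_kernelMatrix_tent t _).smul (hweight k (mem_Ico.1 hk).2).le))

end

/-- **Positive definiteness of the impact matrix for strictly convex decay kernels.**
If `G` is positive, nonincreasing and strictly convex on `[0,∞)`, and the trading
times are strictly increasing, then the impact matrix `M i j = G(|tᵢ − tⱼ|)` is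
symmetric positive definite; in particular the quadratic form
`∑ᵢ∑ⱼ G(|tᵢ − tⱼ|)·ξᵢ·ξⱼ` is strictly positive for every nonzero `ξ`. -/
theorem impact_matrix_posdef
    (N : ℕ) (t : Fin (N + 1) → ℝ) (ht : StrictMono t)
    (G : ℝ → ℝ)
    (hGpos : ∀ s : ℝ, 0 ≤ s → 0 < G s)
    (hGmono : ∀ s s' : ℝ, 0 ≤ s → s ≤ s' → G s' ≤ G s)
    (hGconv : StrictConvexOn ℝ (Set.Ici (0 : ℝ)) G)
    (M : Matrix (Fin (N + 1)) (Fin (N + 1)) ℝ)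
    (hM : M = Matrix.of fun i j => G |t i - t j|) :
    M.IsSymm ∧ M.PosDef ∧
      ∀ ξ : Fin (N + 1) → ℝ, ξ ≠ 0 →
        0 < ∑ i, ∑ j, G |t i - t j| * ξ i * ξ j := by
  have hposDef : M.PosDef := hM ▸ posDef_kernelMatrix (fun s hs => (hGpos s hs).le)
    (fun s hs _ _ hss' => hGmono s _ hs hss') hGconv ht.injective
  refine ⟨isHermitian_iff_isSymm.1 hposDef.isHermitian, hposDef, fun ξ hξ => ?_⟩
  have hquad := hposDef.dotProduct_mulVec_pos hξ
  subst hM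
  simpa [dotProduct, mulVec, Finset.mul_sum, mul_comm, mul_left_comm] using hquad
end

section
/- All trades of the optimal strategy have the same sign (Remark 1): Let G : ℝ → ℝ be positive, nonincreasing on [0,∞), and strictly convex on [0,∞), let t₀ < t₁ < ... < t_N be strictly increasing trading times, let M be the impact matrix with entries M_{ij} = G(|t_i − t_j|), and let X₀ > 0. Then every component of M⁻¹𝟙 is strictly positive; consequently every component of the optimal strategy ξ* := −(X₀/(𝟙ᵀM⁻¹𝟙))·M⁻¹𝟙 is strictly negative, i.e., the optimal liquidation strategy consists exclusively of sell trades. -/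
/-!
Up to a positive factor, `M⁻¹𝟙` is the minimiser `z` of `x ↦ xᵀ M x` on the standard simplex.
At a minimiser `(M z)_k ≥ zᵀ M z` for every `k`, with equality where `z_k > 0`. If some `z_k`
vanished, `(M z)_k` would lie strictly below that common value: when the support of `z` lies on
one side of `t_k`, because `G` is strictly decreasing; otherwise, by strict convexity of `G`
between the two support points adjacent to `t_k`. Hence `z > 0` and `M z = c 𝟙` with `c > 0`.
The same strict inequality excludes a kernel vector `v` of `M`: moving `z` along `v` until a
coordinate vanishes produces a nonnegative `y` with a zero coordinate and still `M y = c 𝟙`.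
-/

open Matrix Finset Set Filter Topology

lemma StrictConvexOn.strictAntiOn_of_antitoneOn {G : ℝ → ℝ}
    (hconv : StrictConvexOn ℝ (Ici 0) G) (hmono : AntitoneOn G (Ici 0)) :
    StrictAntiOn G (Ici 0) := by
  intro u hu v hv huv
  have hmid : (u + v) / 2 ∈ Ici (0 : ℝ) := mem_Ici.2 (by linarith [mem_Ici.1 hu, mem_Ici.1 hv])
  have hconv_mid := hconv.secant_strict_mono_aux1 hu hv (by linarith : u < (u + v) / 2)
    (by linarith : (u + v) / 2 < v)
  have hmono_mid := hmono hmid hv (by linarith)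
  nlinarith

lemma StrictAntiOn.apply_abs_sub_lt {G : ℝ → ℝ} (hG : StrictAntiOn G (Ici 0)) {a b s : ℝ}
    (hab : a < b) (hbs : b ≤ s) : G |a - s| < G |b - s| := by
  refine hG (mem_Ici.2 (abs_nonneg _)) (mem_Ici.2 (abs_nonneg _)) ?_
  rw [abs_of_nonpos (by linarith), abs_of_nonpos (by linarith)]
  linarith

lemma StrictConvexOn.mul_apply_abs_sub_lt {G : ℝ → ℝ} (hG : StrictConvexOn ℝ (Ici 0) G)
    {a b c s : ℝ} (hab : a < b) (hbc : b < c) (hs : s ≤ a ∨ c ≤ s) :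
    (c - a) * G |b - s| < (c - b) * G |a - s| + (b - a) * G |c - s| := by
  rcases hs with hs | hs
  · have := hG.secant_strict_mono_aux1 (x := a - s) (y := b - s) (z := c - s)
      (mem_Ici.2 (by linarith)) (mem_Ici.2 (by linarith)) (by linarith) (by linarith)
    rw [abs_of_nonneg (by linarith : 0 ≤ a - s), abs_of_nonneg (by linarith : 0 ≤ b - s),
      abs_of_nonneg (by linarith : 0 ≤ c - s)]
    linarith
  · have := hG.secant_strict_mono_aux1 (x := s - c) (y := s - b) (z := s - a)
      (mem_Ici.2 (by linarith)) (mem_Ici.2 (by linarith)) (by linarith) (by linarith)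
    rw [abs_sub_comm a, abs_sub_comm b, abs_sub_comm c, abs_of_nonneg (by linarith : 0 ≤ s - a),
      abs_of_nonneg (by linarith : 0 ≤ s - b), abs_of_nonneg (by linarith : 0 ≤ s - c)]
    linarith

lemma sum_mul_lt_sum_mul_of_lt_on_support {ι : Type*} [Fintype ι] {z f g : ι → ℝ} (hz : 0 ≤ z)
    (hpos : ∃ j, 0 < z j) (hfg : ∀ j, 0 < z j → f j < g j) :
    ∑ j, f j * z j < ∑ j, g j * z j := by
  obtain ⟨j, hj⟩ := hpos
  refine sum_lt_sum (fun i _ => ?_) ⟨j, mem_univ j, mul_lt_mul_of_pos_right (hfg j hj) hj⟩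
  rcases (hz i).eq_or_lt with hi | hi
  · simp [← hi]
  · exact mul_le_mul_of_nonneg_right (hfg i hi).le hi.le

section QuadraticForm

variable {ι : Type*} [Fintype ι] {M : Matrix ι ι ℝ}

lemma Matrix.IsSymm.dotProduct_mulVec_add_smul (hM : M.IsSymm) (z d : ι → ℝ) (ε : ℝ) :
    (z + ε • d) ⬝ᵥ M *ᵥ (z + ε • d) =
      z ⬝ᵥ M *ᵥ z + 2 * ε * (d ⬝ᵥ M *ᵥ z) + ε ^ 2 * (d ⬝ᵥ M *ᵥ d) := by
  have hswap : z ⬝ᵥ M *ᵥ d = d ⬝ᵥ M *ᵥ z := by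
    rw [dotProduct_mulVec, dotProduct_comm, ← vecMul_transpose, hM.eq]
  simp only [mulVec_add, mulVec_smul, add_dotProduct, dotProduct_add, smul_dotProduct,
    dotProduct_smul, hswap, smul_eq_mul]
  ring

lemma IsMinOn.dotProduct_mulVec_le (hM : M.IsSymm) {s : Set (ι → ℝ)} (hs : Convex ℝ s)
    {z y : ι → ℝ} (hmin : IsMinOn (fun x => x ⬝ᵥ M *ᵥ x) s z) (hz : z ∈ s) (hy : y ∈ s) :
    z ⬝ᵥ M *ᵥ z ≤ y ⬝ᵥ M *ᵥ z := by
  set D := (y - z) ⬝ᵥ M *ᵥ z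
  set C := (y - z) ⬝ᵥ M *ᵥ (y - z)
  have hsmall : ∀ ε ∈ Ioc (0 : ℝ) 1, 0 ≤ 2 * D + ε * C := by
    rintro ε ⟨hε, hε1⟩
    have hle := isMinOn_iff.1 hmin _ (hs.add_smul_sub_mem hz hy ⟨hε.le, hε1⟩)
    rw [hM.dotProduct_mulVec_add_smul] at hle
    refine nonneg_of_mul_nonneg_right (a := ε) ?_ hε
    nlinarith
  have hlim : Tendsto (fun ε => 2 * D + ε * C) (𝓝[>] 0) (𝓝 (2 * D)) := by
    refine tendsto_nhdsWithin_of_tendsto_nhds ?_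
    simpa using (tendsto_const_nhds (x := 2 * D)).add
      ((tendsto_id (x := 𝓝 (0 : ℝ))).mul (tendsto_const_nhds (x := C)))
  have hD := ge_of_tendsto hlim (eventually_of_mem (Ioc_mem_nhdsGT one_pos) hsmall)
  have : D = y ⬝ᵥ M *ᵥ z - z ⬝ᵥ M *ᵥ z := sub_dotProduct _ _ _
  linarith

end QuadraticForm

lemma eq_of_le_of_dotProduct_eq {ι : Type*} [Fintype ι] {z w : ι → ℝ} {c : ℝ}
    (hz : z ∈ stdSimplex ℝ ι) (hw : ∀ k, c ≤ w k) (hzw : z ⬝ᵥ w = c) {k : ι} (hk : 0 < z k) :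
    w k = c := by
  have hsum : ∑ j, z j * (w j - c) = 0 := by
    simp only [mul_sub, sum_sub_distrib, ← sum_mul, hz.2, one_mul]
    exact sub_eq_zero.2 hzw
  have hterm := (sum_eq_zero_iff_of_nonneg fun j _ => mul_nonneg (hz.1 j) (sub_nonneg.2 (hw j))).1
    hsum k (mem_univ k)
  linarith [(mul_eq_zero.1 hterm).resolve_left hk.ne']

lemma exists_nonneg_sub_smul_eq_zero {ι : Type*} [Fintype ι] {z v : ι → ℝ} (hz : ∀ i, 0 < z i)
    (hv : v ≠ 0) : ∃ a : ℝ, 0 ≤ z - a • v ∧ ∃ i, (z - a • v) i = 0 := by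
  obtain ⟨i₁, hi₁⟩ := Function.ne_iff.1 hv
  obtain ⟨i₀, -, hmax⟩ := univ.exists_max_image (fun i => |v i| / z i) ⟨i₁, mem_univ _⟩
  have hvi₀ : 0 < |v i₀| := by
    have h₁ : 0 < |v i₁| / z i₁ := div_pos (abs_pos.2 hi₁) (hz i₁)
    have h₀ := h₁.trans_le (hmax i₁ (mem_univ _))
    exact (div_pos_iff_of_pos_right (hz i₀)).1 h₀
  refine ⟨z i₀ / v i₀, fun i => ?_, i₀, ?_⟩
  · have hi := hmax i (mem_univ _)
    rw [div_le_div_iff₀ (hz i) (hz i₀)] at hi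
    have : |z i₀ / v i₀ * v i| ≤ z i := by
      rw [abs_mul, abs_div, abs_of_pos (hz i₀), div_mul_eq_mul_div, div_le_iff₀ hvi₀]
      linarith
    simpa using (le_abs_self _).trans this
  · simp [div_mul_cancel₀ _ (abs_pos.1 hvi₀)]

noncomputable def impactMatrix {ι : Type*} (G : ℝ → ℝ) (t : ι → ℝ) : Matrix ι ι ℝ :=
  Matrix.of fun i j => G |t i - t j|

section ImpactMatrix

variable {ι : Type*} {G : ℝ → ℝ} {t : ι → ℝ}

lemma impactMatrix_isSymm : (impactMatrix G t).IsSymm := by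
  ext i j
  simp [impactMatrix, abs_sub_comm]

lemma impactMatrix_neg : impactMatrix G (-t) = impactMatrix G t := by
  ext i j
  simp [impactMatrix, neg_add_eq_sub, abs_sub_comm]

variable [Fintype ι]

lemma impactMatrix_mulVec_apply (z : ι → ℝ) (i : ι) :
    (impactMatrix G t *ᵥ z) i = ∑ j, G |t i - t j| * z j := rfl

lemma impactMatrix_mulVec_lt_of_forall_lt (hG : StrictAntiOn G (Ici 0)) {z : ι → ℝ} (hz : 0 ≤ z)
    (hpos : ∃ j, 0 < z j) {c : ℝ} (hc : ∀ j, 0 < z j → (impactMatrix G t *ᵥ z) j = c) {k : ι}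
    (hright : ∀ j, 0 < z j → t k < t j) : (impactMatrix G t *ᵥ z) k < c := by
  let S := univ.filter fun j => 0 < z j
  obtain ⟨q, hqS, hqmin⟩ := S.exists_min_image t
    (by obtain ⟨j, hj⟩ := hpos; exact ⟨j, mem_filter.2 ⟨mem_univ j, hj⟩⟩)
  have hq : 0 < z q := (mem_filter.1 hqS).2
  rw [← hc q hq, impactMatrix_mulVec_apply, impactMatrix_mulVec_apply]
  exact sum_mul_lt_sum_mul_of_lt_on_support hz hpos fun j hj =>
    hG.apply_abs_sub_lt (hright q hq) (hqmin j (mem_filter.2 ⟨mem_univ j, hj⟩))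

lemma impactMatrix_mulVec_lt_of_gap (hG : StrictConvexOn ℝ (Ici 0) G) {z : ι → ℝ} (hz : 0 ≤ z)
    {c : ℝ} (hc : ∀ j, 0 < z j → (impactMatrix G t *ᵥ z) j = c) {p q k : ι} (hp : 0 < z p)
    (hq : 0 < z q) (hpk : t p < t k) (hkq : t k < t q)
    (hgap : ∀ j, 0 < z j → t j ≤ t p ∨ t q ≤ t j) : (impactMatrix G t *ᵥ z) k < c := by
  have hsum : (t q - t p) * (impactMatrix G t *ᵥ z) k <
      (t q - t k) * (impactMatrix G t *ᵥ z) p + (t k - t p) * (impactMatrix G t *ᵥ z) q := by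
    simp only [impactMatrix_mulVec_apply, mul_sum, ← mul_assoc, ← sum_add_distrib, ← add_mul]
    exact sum_mul_lt_sum_mul_of_lt_on_support hz ⟨p, hp⟩ fun j hj =>
      hG.mul_apply_abs_sub_lt hpk hkq (hgap j hj)
  rw [hc p hp, hc q hq] at hsum
  nlinarith

lemma impactMatrix_mulVec_lt (ht : Function.Injective t) (hanti : StrictAntiOn G (Ici 0))
    (hconv : StrictConvexOn ℝ (Ici 0) G) {z : ι → ℝ} (hz : 0 ≤ z) (hpos : ∃ j, 0 < z j) {c : ℝ}
    (hc : ∀ j, 0 < z j → (impactMatrix G t *ᵥ z) j = c) {k : ι} (hk : z k = 0) :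
    (impactMatrix G t *ᵥ z) k < c := by
  have hside : ∀ j, 0 < z j → t j < t k ∨ t k < t j := fun j hj =>
    (ht.ne fun h : j = k => hj.ne' (h ▸ hk)).lt_or_gt
  let L := univ.filter fun j => 0 < z j ∧ t j < t k
  let R := univ.filter fun j => 0 < z j ∧ t k < t j
  rcases L.eq_empty_or_nonempty with hL | ⟨p₀, hp₀⟩
  · refine impactMatrix_mulVec_lt_of_forall_lt hanti hz hpos hc fun j hj => ?_
    refine (hside j hj).resolve_left fun hjk => ?_
    simpa [hL] using (show j ∈ L from mem_filter.2 ⟨mem_univ j, hj, hjk⟩)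
  rcases R.eq_empty_or_nonempty with hR | ⟨q₀, hq₀⟩
  · rw [← impactMatrix_neg] at hc ⊢
    refine impactMatrix_mulVec_lt_of_forall_lt hanti hz hpos hc fun j hj => ?_
    refine neg_lt_neg ((hside j hj).resolve_right fun hkj => ?_)
    simpa [hR] using (show j ∈ R from mem_filter.2 ⟨mem_univ j, hj, hkj⟩)
  obtain ⟨p, hpL, hpmax⟩ := L.exists_max_image t ⟨p₀, hp₀⟩
  obtain ⟨q, hqR, hqmin⟩ := R.exists_min_image t ⟨q₀, hq₀⟩
  obtain ⟨-, hp, hpk⟩ := mem_filter.1 hpL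
  obtain ⟨-, hq, hkq⟩ := mem_filter.1 hqR
  refine impactMatrix_mulVec_lt_of_gap hconv hz hc hp hq hpk hkq fun j hj => ?_
  rcases hside j hj with hjk | hkj
  · exact Or.inl (hpmax j (mem_filter.2 ⟨mem_univ j, hj, hjk⟩))
  · exact Or.inr (hqmin j (mem_filter.2 ⟨mem_univ j, hj, hkj⟩))

end ImpactMatrix

section ImpactMatrixInverse

variable {ι : Type*} [Fintype ι] {G : ℝ → ℝ} {t : ι → ℝ}

lemma exists_pos_impactMatrix_mulVec_eq_smul_one [Nonempty ι] (ht : Function.Injective t)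
    (hpos : ∀ s, 0 ≤ s → 0 < G s) (hanti : StrictAntiOn G (Ici 0))
    (hconv : StrictConvexOn ℝ (Ici 0) G) :
    ∃ z : ι → ℝ, (∀ i, 0 < z i) ∧ ∃ c : ℝ, 0 < c ∧ impactMatrix G t *ᵥ z = c • 1 := by
  classical
  obtain ⟨z, hzS, hmin⟩ := (isCompact_stdSimplex ℝ ι).exists_isMinOn
    ⟨_, single_mem_stdSimplex ℝ (Classical.arbitrary ι)⟩
    (f := fun x => x ⬝ᵥ impactMatrix G t *ᵥ x) (by fun_prop : Continuous _).continuousOn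
  set c := z ⬝ᵥ impactMatrix G t *ᵥ z
  have hfirst : ∀ k, c ≤ (impactMatrix G t *ᵥ z) k := fun k => by
    have := hmin.dotProduct_mulVec_le impactMatrix_isSymm (convex_stdSimplex ℝ ι) hzS
      (single_mem_stdSimplex ℝ k)
    rwa [single_dotProduct, one_mul] at this
  have hsupp : ∀ j, 0 < z j → (impactMatrix G t *ᵥ z) j = c := fun j hj =>
    eq_of_le_of_dotProduct_eq hzS hfirst rfl hj
  have hz : ∀ k, 0 < z k := fun k => by
    refine (hzS.1 k).lt_of_ne fun hk => (hfirst k).not_gt ?_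
    refine impactMatrix_mulVec_lt ht hanti hconv hzS.1 ?_ hsupp hk.symm
    simpa using exists_lt_of_sum_lt (s := univ) (f := 0) (g := z) (by simp [hzS.2])
  refine ⟨z, hz, c, ?_, funext fun i => by simpa using hsupp i (hz i)⟩
  rw [← hsupp _ (hz (Classical.arbitrary ι)), impactMatrix_mulVec_apply]
  exact sum_pos (fun j _ => mul_pos (hpos _ (abs_nonneg _)) (hz j)) univ_nonempty

variable [DecidableEq ι]

lemma isUnit_det_impactMatrix (ht : Function.Injective t) (hpos : ∀ s, 0 ≤ s → 0 < G s)
    (hanti : StrictAntiOn G (Ici 0)) (hconv : StrictConvexOn ℝ (Ici 0) G) :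
    IsUnit (impactMatrix G t).det := by
  rw [isUnit_iff_ne_zero, ne_eq, ← exists_mulVec_eq_zero_iff]
  rintro ⟨v, hv, hMv⟩
  have : Nonempty ι := by
    obtain ⟨i, -⟩ := Function.ne_iff.1 hv
    exact ⟨i⟩
  obtain ⟨z, hz, c, hc, hMz⟩ := exists_pos_impactMatrix_mulVec_eq_smul_one ht hpos hanti hconv
  obtain ⟨a, hy, i, hyi⟩ := exists_nonneg_sub_smul_eq_zero hz hv
  have hMy : impactMatrix G t *ᵥ (z - a • v) = c • 1 := by
    rw [mulVec_sub, mulVec_smul, hMv, smul_zero, sub_zero, hMz]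
  have hy_ne : ∃ j, 0 < (z - a • v) j := by
    by_contra! h
    have : z - a • v = 0 := funext fun j => le_antisymm (h j) (hy j)
    rw [this, mulVec_zero] at hMy
    exact hc.ne (by simpa using congrFun hMy i)
  have := impactMatrix_mulVec_lt ht hanti hconv hy hy_ne (c := c) (fun j _ => by simp [hMy]) hyi
  simp [hMy] at this

lemma impactMatrix_inv_mulVec_one_pos (ht : Function.Injective t) (hpos : ∀ s, 0 ≤ s → 0 < G s)
    (hanti : StrictAntiOn G (Ici 0)) (hconv : StrictConvexOn ℝ (Ici 0) G) (i : ι) :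
    0 < ((impactMatrix G t)⁻¹ *ᵥ 1) i := by
  have : Nonempty ι := ⟨i⟩
  obtain ⟨z, hz, c, hc, hMz⟩ := exists_pos_impactMatrix_mulVec_eq_smul_one ht hpos hanti hconv
  have hinv : c • ((impactMatrix G t)⁻¹ *ᵥ 1) = z := by
    rw [← mulVec_smul, ← hMz, mulVec_mulVec,
      nonsing_inv_mul _ (isUnit_det_impactMatrix ht hpos hanti hconv), one_mulVec]
  have := hz i
  rw [← hinv, Pi.smul_apply, smul_eq_mul] at this
  exact pos_of_mul_pos_right this hc.le

end ImpactMatrixInverse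

/-- **All trades of the optimal strategy have the same sign (Remark 1).**
If `G` is positive, nonincreasing and strictly convex on `[0,∞)` and `X₀ > 0`,
then every component of `M⁻¹𝟙` is strictly positive, and consequently every
component of the optimal strategy `ξ* := −(X₀/(𝟙ᵀM⁻¹𝟙))·M⁻¹𝟙` is strictly
negative: the optimal liquidation strategy consists exclusively of sell trades. -/
theorem optimal_strategy_all_sells
    (N : ℕ) (t : Fin (N + 1) → ℝ) (ht : StrictMono t)
    (G : ℝ → ℝ)
    (hGpos : ∀ s : ℝ, 0 ≤ s → 0 < G s)
    (hGmono : ∀ s s' : ℝ, 0 ≤ s → s ≤ s' → G s' ≤ G s)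
    (hGconv : StrictConvexOn ℝ (Set.Ici (0 : ℝ)) G)
    (M : Matrix (Fin (N + 1)) (Fin (N + 1)) ℝ)
    (hM : M = Matrix.of fun i j => G |t i - t j|)
    (one : Fin (N + 1) → ℝ) (hone : one = fun _ => 1)
    (X₀ : ℝ) (hX₀ : 0 < X₀)
    (ξstar : Fin (N + 1) → ℝ)
    (hξstar : ξstar = fun i => -(X₀ / (one ⬝ᵥ (M⁻¹ *ᵥ one))) * (M⁻¹ *ᵥ one) i) :
    (∀ i, 0 < (M⁻¹ *ᵥ one) i) ∧ (∀ i, ξstar i < 0) := by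
  have hanti : StrictAntiOn G (Ici 0) :=
    hGconv.strictAntiOn_of_antitoneOn fun s hs _ _ hss' => hGmono s _ hs hss'
  have hpos : ∀ i, 0 < (M⁻¹ *ᵥ one) i := by
    subst hM hone
    exact impactMatrix_inv_mulVec_one_pos ht.injective hGpos hanti hGconv
  have hsum : 0 < one ⬝ᵥ (M⁻¹ *ᵥ one) := by
    simpa [hone, dotProduct] using sum_pos (fun i _ => hpos i) univ_nonempty
  subst hξstar
  exact ⟨hpos, fun i => by
    simpa using mul_pos (div_pos hX₀ hsum) (hpos i)⟩
end
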